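/- There exists a convergent sequence (z_n)_{n≥0} of complex numbers that is not the Taylor coefficient sequence of any analytic function f belonging to the Besov space B⁰_{1,∞}; that is, the space c is not contained in { (f̂(n))_{n≥0} : f ∈ B⁰_{1,∞} }. -/

import Mathlib

/-!
Rudin–Shapiro polynomials `P_s` have unimodular coefficients in degrees `< 2^s`, so
`‖P_s‖₂² = 2^s` by Parseval, while `|P_s|² + |Q_s|² = 2^(s+1)` on the circle gives
`‖P_s‖_∞ ≤ 2^((s+1)/2)`; hence `‖P_s‖₁ ≥ ‖P_s‖₂² / ‖P_s‖_∞ ≥ 2^((s-1)/2)`.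
Put the coefficients of `2^(-n/4) P_{n-1}`, divided by `Ŵ_n`, in the dyadic block `[2^n, 2^(n+1))`
for every `n ≡ 0 mod 4`. The resulting sequence `z` tends to `0`, but `(z * W_n)(w) = 2^(-n/4) w^(2^n) P_{n-1}(w)`
has `L¹` norm at least `2^(n/4 - 1)`.
-/

open Filter Finset

/-- Coefficients of the polynomials `W_n`: `Ŵ_0` is the indicator of `{0,1}`; for `n ≥ 1`,
`Ŵ_n` is the triangular function with peak `1` at `2^n`, supported in `(2^(n-1), 2^(n+1))`. -/
noncomputable def Wcoef : ℕ → ℕ → ℝ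
  | 0, k => if k ≤ 1 then 1 else 0
  | (n + 1), k =>
      if 2 ^ n ≤ k ∧ k ≤ 2 ^ (n + 1) then ((k : ℝ) - 2 ^ n) / 2 ^ n
      else if 2 ^ (n + 1) ≤ k ∧ k ≤ 2 ^ (n + 2) then ((2 ^ (n + 2) : ℝ) - k) / 2 ^ (n + 1)
      else 0

/-- `(f * W_n)(z) = ∑_k f̂(k) Ŵ_n(k) z^k` for the Taylor coefficient sequence `f`. -/
noncomputable def convW (f : ℕ → ℂ) (n : ℕ) (z : ℂ) : ℂ :=
  ∑ k ∈ Finset.range (2 ^ (n + 1) + 1), f k * (Wcoef n k : ℂ) * z ^ k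

/-- L¹ norm over the unit circle with respect to normalized Lebesgue measure. -/
noncomputable def l1Circle (g : ℂ → ℂ) : ℝ :=
  (2 * Real.pi)⁻¹ * ∫ θ in (0 : ℝ)..(2 * Real.pi), ‖g (Complex.exp (θ * Complex.I))‖

/-- `f ∈ B⁰_{1,∞}`: the L¹ norms over the circle of `f*W_n` are uniformly bounded. -/
def MemB01inf (f : ℕ → ℂ) : Prop :=
  ∃ C : ℝ, ∀ n : ℕ, l1Circle (convW f n) ≤ C

/-- A sequence of complex numbers having a limit at infinity (an element of `c`). -/
def IsConvergent (x : ℕ → ℂ) : Prop := ∃ l : ℂ, Filter.Tendsto x Filter.atTop (nhds l)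

open Complex ComplexConjugate Polynomial

lemma integral_exp_mul_I_pow_mul_conj (j k : ℕ) :
    ∫ θ in (0 : ℝ)..2 * Real.pi, exp (θ * I) ^ j * conj (exp (θ * I) ^ k)
      = if j = k then (2 * Real.pi : ℂ) else 0 := by
  have hexp : ∀ θ : ℝ, exp (θ * I) ^ j * conj (exp (θ * I) ^ k)
      = exp ((((j : ℤ) - k : ℤ) : ℂ) * I * θ) := by
    intro θ
    rw [map_pow, ← exp_conj, ← exp_nat_mul, ← exp_nat_mul, ← exp_add]
    congr 1
    simp only [map_mul, conj_ofReal, conj_I]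
    push_cast
    ring
  simp_rw [hexp]
  split_ifs with hjk
  · simp [hjk]
  · have hne : (((j : ℤ) - k : ℤ) : ℂ) * I ≠ 0 :=
      mul_ne_zero (Int.cast_ne_zero.mpr (sub_ne_zero.mpr (Nat.cast_injective.ne hjk))) I_ne_zero
    rw [integral_exp_mul_complex hne, ofReal_zero, mul_zero, exp_zero, ofReal_mul, ofReal_ofNat,
      show (((j : ℤ) - k : ℤ) : ℂ) * I * (2 * Real.pi) = ((j : ℤ) - k : ℤ) * (2 * Real.pi * I) by
        ring, exp_int_mul_two_pi_mul_I, sub_self, zero_div]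

lemma integral_eval_exp_mul_I_mul_conj_pow (p : ℂ[X]) (k : ℕ) :
    ∫ θ in (0 : ℝ)..2 * Real.pi, p.eval (exp (θ * I)) * conj (exp (θ * I) ^ k)
      = 2 * Real.pi * p.coeff k := by
  simp_rw [eval_eq_sum_range, Finset.sum_mul, mul_assoc]
  rw [intervalIntegral.integral_finsetSum fun i _ => Continuous.intervalIntegrable (by fun_prop) _ _]
  simp_rw [intervalIntegral.integral_const_mul, integral_exp_mul_I_pow_mul_conj, mul_ite, mul_zero,
    Finset.sum_ite_eq', Finset.mem_range]
  split_ifs with hk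
  · ring
  · rw [coeff_eq_zero_of_natDegree_lt (by omega), mul_zero, mul_zero]

lemma integral_norm_eval_exp_mul_I_sq (p : ℂ[X]) {N : ℕ} (hN : p.natDegree < N) :
    ∫ θ in (0 : ℝ)..2 * Real.pi, ‖p.eval (exp (θ * I))‖ ^ 2
      = 2 * Real.pi * ∑ k ∈ range N, ‖p.coeff k‖ ^ 2 := by
  have hexpand : ∀ θ : ℝ, ((‖p.eval (exp (θ * I))‖ ^ 2 : ℝ) : ℂ)
      = ∑ k ∈ range N, conj (p.coeff k) * (p.eval (exp (θ * I)) * conj (exp (θ * I) ^ k)) := by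
    intro θ
    push_cast
    rw [← mul_conj']
    nth_rw 2 [eval_eq_sum_range' hN]
    simp only [map_sum, map_mul, Finset.mul_sum]
    exact Finset.sum_congr rfl fun k _ => by ring
  apply ofReal_injective
  rw [← intervalIntegral.integral_ofReal]
  simp_rw [hexpand]
  rw [intervalIntegral.integral_finsetSum fun i _ => Continuous.intervalIntegrable (by fun_prop) _ _]
  simp_rw [intervalIntegral.integral_const_mul, integral_eval_exp_mul_I_mul_conj_pow]
  push_cast
  rw [Finset.mul_sum]
  exact Finset.sum_congr rfl fun k _ => by rw [← conj_mul']; ring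

lemma l1Circle_eq_mul_of_norm_eq {g h : ℂ → ℂ} {c : ℝ}
    (hgh : ∀ w : ℂ, ‖w‖ = 1 → ‖g w‖ = c * ‖h w‖) : l1Circle g = c * l1Circle h := by
  unfold l1Circle
  simp_rw [hgh _ (norm_exp_ofReal_mul_I _), intervalIntegral.integral_const_mul]
  ring

lemma sum_norm_coeff_sq_le_mul_l1Circle (p : ℂ[X]) {N : ℕ} (hN : p.natDegree < N) {M : ℝ}
    (hM : ∀ w : ℂ, ‖w‖ = 1 → ‖p.eval w‖ ≤ M) :
    ∑ k ∈ range N, ‖p.coeff k‖ ^ 2 ≤ M * l1Circle (fun w => p.eval w) := by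
  have hpi : 0 < 2 * Real.pi := by positivity
  have hcont : Continuous fun θ : ℝ => ‖p.eval (exp (θ * I))‖ := by fun_prop
  have hsq_le : ∫ θ in (0 : ℝ)..2 * Real.pi, ‖p.eval (exp (θ * I))‖ ^ 2
      ≤ ∫ θ in (0 : ℝ)..2 * Real.pi, M * ‖p.eval (exp (θ * I))‖ := by
    refine intervalIntegral.integral_mono_on hpi.le ((hcont.pow 2).intervalIntegrable _ _)
      ((hcont.const_mul M).intervalIntegrable _ _) fun θ _ => ?_
    rw [sq]
    exact mul_le_mul_of_nonneg_right (hM _ (norm_exp_ofReal_mul_I θ)) (norm_nonneg _)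
  rw [integral_norm_eval_exp_mul_I_sq p hN, intervalIntegral.integral_const_mul] at hsq_le
  unfold l1Circle
  rw [mul_left_comm, le_inv_mul_iff₀ hpi]
  exact hsq_le

noncomputable def rudinShapiro : ℕ → ℂ[X] × ℂ[X]
  | 0 => (1, 1)
  | s + 1 => ((rudinShapiro s).1 + X ^ 2 ^ s * (rudinShapiro s).2,
      (rudinShapiro s).1 - X ^ 2 ^ s * (rudinShapiro s).2)

lemma norm_coeff_rudinShapiro (s k : ℕ) :
    ‖(rudinShapiro s).1.coeff k‖ = (if k < 2 ^ s then 1 else 0) ∧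
      ‖(rudinShapiro s).2.coeff k‖ = (if k < 2 ^ s then 1 else 0) := by
  induction s generalizing k with
  | zero => rcases k with _ | k <;> simp [rudinShapiro, coeff_one]
  | succ s ih =>
    simp only [rudinShapiro, coeff_add, coeff_sub, coeff_X_pow_mul']
    have hpow : 2 ^ (s + 1) = 2 ^ s + 2 ^ s := by ring
    by_cases hk : k < 2 ^ s
    · rw [if_neg (by omega), add_zero, sub_zero, (ih k).1, if_pos hk, if_pos (by omega)]
      exact ⟨rfl, rfl⟩
    · have hP : (rudinShapiro s).1.coeff k = 0 := by simpa [hk] using (ih k).1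
      rw [if_pos (by omega), hP, zero_add, zero_sub, norm_neg, (ih _).2]
      simp only [show k - 2 ^ s < 2 ^ s ↔ k < 2 ^ (s + 1) by omega, and_self]

lemma natDegree_rudinShapiro_fst_lt (s : ℕ) : (rudinShapiro s).1.natDegree < 2 ^ s := by
  have hle : (rudinShapiro s).1.natDegree ≤ 2 ^ s - 1 :=
    natDegree_le_iff_coeff_eq_zero.mpr fun k hk => by
      simpa [show ¬k < 2 ^ s by omega] using (norm_coeff_rudinShapiro s k).1
  have := Nat.one_le_two_pow (n := s)
  omega

lemma norm_eval_rudinShapiro_sq_add {z : ℂ} (hz : ‖z‖ = 1) (s : ℕ) :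
    ‖(rudinShapiro s).1.eval z‖ ^ 2 + ‖(rudinShapiro s).2.eval z‖ ^ 2 = 2 ^ (s + 1) := by
  induction s with
  | zero => norm_num [rudinShapiro]
  | succ s ih =>
    have hshift : ‖z ^ 2 ^ s * (rudinShapiro s).2.eval z‖ = ‖(rudinShapiro s).2.eval z‖ := by
      rw [norm_mul, norm_pow, hz, one_pow, one_mul]
    have hpar := parallelogram_law_with_norm ℂ ((rudinShapiro s).1.eval z)
      (z ^ 2 ^ s * (rudinShapiro s).2.eval z)
    simp only [rudinShapiro, eval_add, eval_sub, eval_mul, eval_pow, eval_X]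
    rw [pow_succ 2 (s + 1), ← ih, ← hshift]
    nlinarith [hpar]

lemma pow_le_sqrt_mul_l1Circle_rudinShapiro (s : ℕ) :
    (2 : ℝ) ^ s ≤ √(2 ^ (s + 1)) * l1Circle (fun w => (rudinShapiro s).1.eval w) := by
  have hsup : ∀ w : ℂ, ‖w‖ = 1 → ‖(rudinShapiro s).1.eval w‖ ≤ √(2 ^ (s + 1)) := fun w hw =>
    Real.le_sqrt_of_sq_le <| by
      nlinarith [norm_eval_rudinShapiro_sq_add hw s, sq_nonneg ‖(rudinShapiro s).2.eval w‖]
  have hsum : ∑ k ∈ range (2 ^ s), ‖(rudinShapiro s).1.coeff k‖ ^ 2 = 2 ^ s := by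
    rw [Finset.sum_congr rfl fun k hk => by
      rw [(norm_coeff_rudinShapiro s k).1, if_pos (Finset.mem_range.mp hk), one_pow]]
    simp
  simpa [hsum] using
    sum_norm_coeff_sq_le_mul_l1Circle _ (natDegree_rudinShapiro_fst_lt s) hsup

section Wcoef

variable {p k : ℕ}

lemma Wcoef_succ_eq_zero_of_lt (hk : k < 2 ^ p) : Wcoef (p + 1) k = 0 := by
  have : 2 ^ (p + 1) = 2 ^ p + 2 ^ p := by ring
  rw [Wcoef, if_neg (by omega), if_neg (by omega)]

lemma Wcoef_succ_of_le_of_le (h₁ : 2 ^ (p + 1) ≤ k) (h₂ : k ≤ 2 ^ (p + 2)) :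
    Wcoef (p + 1) k = (2 ^ (p + 2) - k) / 2 ^ (p + 1) := by
  by_cases hk : k = 2 ^ (p + 1)
  · subst hk
    rw [Wcoef, if_pos ⟨Nat.pow_le_pow_right two_pos p.le_succ, le_rfl⟩]
    push_cast
    field_simp
    ring
  · rw [Wcoef, if_neg (by omega), if_pos ⟨h₁, h₂⟩]

lemma Wcoef_succ_eq_zero_of_le (hk : 2 ^ (p + 2) ≤ k) : Wcoef (p + 1) k = 0 := by
  have : 2 ^ (p + 2) = 2 ^ (p + 1) + 2 ^ (p + 1) := by ring
  rcases hk.eq_or_lt with rfl | hlt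
  · rw [Wcoef_succ_of_le_of_le (Nat.pow_le_pow_right two_pos (p + 1).le_succ) le_rfl]
    simp
  · rw [Wcoef, if_neg (by omega), if_neg (by omega)]

lemma Wcoef_succ_pos (h₁ : 2 ^ (p + 1) ≤ k) (h₂ : k < 2 ^ (p + 2)) : 0 < Wcoef (p + 1) k := by
  rw [Wcoef_succ_of_le_of_le h₁ h₂.le]
  have : (k : ℝ) < 2 ^ (p + 2) := by exact_mod_cast h₂
  exact div_pos (by linarith) (by positivity)

lemma half_le_Wcoef_succ (h₁ : 2 ^ (p + 1) ≤ k) (h₂ : k < 2 ^ (p + 1) + 2 ^ p) :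
    1 / 2 ≤ Wcoef (p + 1) k := by
  have hpow : 2 ^ (p + 2) = 2 ^ (p + 1) + 2 ^ (p + 1) := by ring
  have hpow' : 2 ^ (p + 1) = 2 ^ p + 2 ^ p := by ring
  rw [Wcoef_succ_of_le_of_le h₁ (by omega), le_div_iff₀ (by positivity)]
  have : (k : ℝ) ≤ 2 ^ (p + 1) + 2 ^ p := by exact_mod_cast h₂.le
  have : (2 : ℝ) ^ (p + 2) = 4 * 2 ^ p := by ring
  have : (2 : ℝ) ^ (p + 1) = 2 * 2 ^ p := by ring
  linarith

end Wcoef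

section BlockSeq

noncomputable def blockSeq (R : ℕ → ℂ[X]) (k : ℕ) : ℂ :=
  (R (Nat.log 2 k)).coeff (k - 2 ^ Nat.log 2 k) / Wcoef (Nat.log 2 k) k

variable {R : ℕ → ℂ[X]}

lemma blockSeq_mul_Wcoef {p : ℕ} (hprev : R p = 0) (hdeg : (R (p + 1)).natDegree < 2 ^ (p + 1))
    (k : ℕ) : blockSeq R k * Wcoef (p + 1) k = (X ^ 2 ^ (p + 1) * R (p + 1)).coeff k := by
  rw [coeff_X_pow_mul']
  rcases lt_or_ge k (2 ^ (p + 1)) with hk | hk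
  · rw [if_neg (by omega)]
    by_cases hlog : Nat.log 2 k = p
    · simp [blockSeq, hlog, hprev]
    · have hlt : Nat.log 2 k < p := by
        have := Nat.log_lt_of_lt_pow' (by positivity) hk
        omega
      rw [Wcoef_succ_eq_zero_of_lt (Nat.lt_pow_of_log_lt one_lt_two hlt), ofReal_zero, mul_zero]
  · rw [if_pos hk]
    rcases lt_or_ge k (2 ^ (p + 2)) with hk' | hk'
    · have hlog : Nat.log 2 k = p + 1 := Nat.log_eq_of_pow_le_of_lt_pow hk hk'
      rw [blockSeq, hlog, div_mul_cancel₀ _ (ofReal_ne_zero.mpr (Wcoef_succ_pos hk hk').ne')]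
    · have : 2 ^ (p + 2) = 2 ^ (p + 1) + 2 ^ (p + 1) := by ring
      rw [Wcoef_succ_eq_zero_of_le hk', ofReal_zero, mul_zero,
        coeff_eq_zero_of_natDegree_lt (by omega)]

lemma norm_blockSeq_le {ε : ℕ → ℝ} (hdeg : ∀ n, (R (n + 1)).natDegree < 2 ^ n)
    (hε : ∀ n j, ‖(R n).coeff j‖ ≤ ε n) (k : ℕ) : ‖blockSeq R k‖ ≤ 2 * ε (Nat.log 2 k) := by
  have hε₀ : ∀ n, 0 ≤ ε n := fun n => (norm_nonneg _).trans (hε n 0)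
  have hk_lt : k < 2 ^ (Nat.log 2 k + 1) := Nat.lt_pow_succ_log_self one_lt_two k
  rw [blockSeq]
  rcases hlog : Nat.log 2 k with _ | p
  · have hW : Wcoef 0 k = 1 := if_pos (by rw [hlog] at hk_lt; omega)
    rw [hW, ofReal_one, div_one]
    linarith [hε 0 (k - 2 ^ 0), hε₀ 0]
  · have hk : 2 ^ (p + 1) ≤ k :=
      hlog ▸ Nat.pow_log_le_self 2 (by rintro rfl; simp at hlog)
    by_cases hj : k - 2 ^ (p + 1) < 2 ^ p
    · have hW := half_le_Wcoef_succ hk (by omega)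
      rw [norm_div, norm_real, Real.norm_of_nonneg (by linarith), div_le_iff₀ (by linarith)]
      nlinarith [hε (p + 1) (k - 2 ^ (p + 1)), hε₀ (p + 1)]
    · rw [coeff_eq_zero_of_natDegree_lt ((hdeg p).trans_le (by omega)), zero_div, norm_zero]
      linarith [hε₀ (p + 1)]

lemma tendsto_blockSeq_zero {ε : ℕ → ℝ} (hdeg : ∀ n, (R (n + 1)).natDegree < 2 ^ n)
    (hε : ∀ n j, ‖(R n).coeff j‖ ≤ ε n) (hε₀ : Tendsto ε atTop (nhds 0)) :
    Tendsto (blockSeq R) atTop (nhds 0) := by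
  have hlog : Tendsto (Nat.log 2) atTop atTop :=
    Nat.log_monotone.tendsto_atTop_atTop fun n => ⟨2 ^ n, Nat.le_log_of_pow_le one_lt_two le_rfl⟩
  rw [tendsto_zero_iff_norm_tendsto_zero]
  refine squeeze_zero (fun _ => norm_nonneg _) (norm_blockSeq_le hdeg hε) ?_
  simpa using (hε₀.comp hlog).const_mul 2

end BlockSeq

lemma convW_eq_eval {f : ℕ → ℂ} {n : ℕ} (p : ℂ[X]) (hp : p.natDegree < 2 ^ (n + 1) + 1)
    (hcoeff : ∀ k, f k * Wcoef n k = p.coeff k) : convW f n = fun w => p.eval w := by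
  funext w
  rw [convW, eval_eq_sum_range' hp]
  simp_rw [hcoeff]

/-- Only blocks `n ≡ 0 mod 4` are used: the block before each of them stays empty and all exponents
are integral. -/
noncomputable def rsBlock : ℕ → ℂ[X]
  | 0 => 0
  | n + 1 => if 4 ∣ n + 1 then C ((2 : ℂ) ^ ((n + 1) / 4))⁻¹ * (rudinShapiro n).1 else 0

lemma natDegree_rsBlock_succ_lt (n : ℕ) : (rsBlock (n + 1)).natDegree < 2 ^ n := by
  rw [rsBlock]
  split_ifs
  · exact (natDegree_C_mul_le _ _).trans_lt (natDegree_rudinShapiro_fst_lt n)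
  · simp

lemma norm_coeff_rsBlock_le (n j : ℕ) : ‖(rsBlock n).coeff j‖ ≤ ((2 : ℝ) ^ (n / 4))⁻¹ := by
  rcases n with _ | n
  · simp [rsBlock]
  rw [rsBlock]
  split_ifs
  · rw [coeff_C_mul, norm_mul, norm_inv, norm_pow, RCLike.norm_two]
    refine mul_le_of_le_one_right (by positivity) ?_
    rw [(norm_coeff_rudinShapiro n j).1]
    split_ifs <;> norm_num
  · simp

lemma tendsto_blockSeq_rsBlock : Tendsto (blockSeq rsBlock) atTop (nhds 0) := by
  refine tendsto_blockSeq_zero natDegree_rsBlock_succ_lt norm_coeff_rsBlock_le ?_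
  simp_rw [← inv_pow]
  exact (tendsto_pow_atTop_nhds_zero_of_lt_one (by norm_num) (by norm_num)).comp
    (Nat.tendsto_div_const_atTop four_ne_zero)

lemma pow_le_l1Circle_convW_blockSeq_rsBlock (q : ℕ) :
    (2 : ℝ) ^ q ≤ l1Circle (convW (blockSeq rsBlock) (4 * q + 4)) := by
  show (2 : ℝ) ^ q ≤ l1Circle (convW (blockSeq rsBlock) (4 * q + 3 + 1))
  set P := (rudinShapiro (4 * q + 3)).1
  have hprev : rsBlock (4 * q + 3) = 0 := by
    rw [rsBlock, if_neg (by omega)]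
  have hblock : rsBlock (4 * q + 3 + 1) = C ((2 : ℂ) ^ (q + 1))⁻¹ * P := by
    rw [rsBlock, if_pos (by omega), show (4 * q + 3 + 1) / 4 = q + 1 by omega]
  have hdeg : (rsBlock (4 * q + 3 + 1)).natDegree < 2 ^ (4 * q + 3) := natDegree_rsBlock_succ_lt _
  have hconv := convW_eq_eval _
    (natDegree_mul_le.trans_lt (by rw [natDegree_X_pow, pow_succ 2 (4 * q + 3 + 1)]; omega))
    (blockSeq_mul_Wcoef hprev (hdeg.trans (Nat.pow_lt_pow_right one_lt_two (by omega))))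
  have hnorm : ∀ w : ℂ, ‖w‖ = 1 → ‖(X ^ 2 ^ (4 * q + 3 + 1) * rsBlock (4 * q + 3 + 1)).eval w‖
      = ((2 : ℝ) ^ (q + 1))⁻¹ * ‖P.eval w‖ := fun w hw => by
    simp [hblock, hw]
  have hRS := pow_le_sqrt_mul_l1Circle_rudinShapiro (4 * q + 3)
  rw [show √((2 : ℝ) ^ (4 * q + 3 + 1)) = 2 ^ (2 * q + 2) by
    rw [Real.sqrt_eq_iff_mul_self_eq_of_pos (by positivity), ← pow_add]; ring_nf] at hRS
  rw [hconv, l1Circle_eq_mul_of_norm_eq hnorm, le_inv_mul_iff₀ (by positivity)]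
  have : (2 : ℝ) ^ (4 * q + 3) = 2 ^ (2 * q + 2) * (2 ^ (q + 1) * 2 ^ q) := by ring
  nlinarith [pow_pos (two_pos : (0 : ℝ) < 2) (2 * q + 2)]

/-- The space `c` is not contained in the set of Taylor coefficient sequences of functions
in `B⁰_{1,∞}`. -/
theorem exists_convergent_not_B01inf :
    ∃ z : ℕ → ℂ, IsConvergent z ∧ ¬ MemB01inf z := by
  refine ⟨blockSeq rsBlock, ⟨0, tendsto_blockSeq_rsBlock⟩, ?_⟩
  rintro ⟨C, hC⟩
  obtain ⟨q, hq⟩ := pow_unbounded_of_one_lt C one_lt_two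
  exact (hq.trans_le (pow_le_l1Circle_convW_blockSeq_rsBlock q)).not_ge (hC _)
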